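/- Let σ, ℓ > 0 and let k(x,y) = σ²·exp(−‖x−y‖²/(2ℓ²)) be the squared exponential kernel on ℝⁿ. Let I be a real inner product space and (x_i, a_i)_{i∈ι} a finite family in ℝⁿ × I. Then for every R ∈ ℝⁿˣⁿ with RᵀR = I and every T ∈ ℝⁿ, |Σ_{i,j} ⟨a_i, a_j⟩ k(x_i, Rᵀx_j − RᵀT)| ≤ Σ_{i,j} ⟨a_i, a_j⟩ k(x_i, x_j), and the right-hand side is nonnegative. (The identity is a global maximum of the alignment functional F over SE(n) when the two point clouds coincide.) -/

import Mathlib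

/-!
The squared exponential kernel is positive semidefinite: splitting off the factors
`exp (-‖xᵢ‖² / 2ℓ²)` leaves the entrywise exponential of a Gram matrix, and every term of its
Taylor series is PSD by the Schur product theorem. A second Schur product with the Gram matrix
of the labels shows that the alignment functional of a cloud with itself is nonnegative.
Applied to the cloud `x ⊔ y`, where `y` is the moved copy of `x`, positivity of the quadratic
form at `(1, ±1)` gives `2 |F(x, y)| ≤ F(x, x) + F(y, y)`, and `F(y, y) = F(x, x)` because a rigid
motion preserves pairwise distances.
-/

open Matrix

/-- The canonical identification of a plain vector `Fin n → ℝ` with a point of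
Euclidean space `ℝⁿ`. -/
def toEuc {n : ℕ} (f : Fin n → ℝ) : EuclideanSpace ℝ (Fin n) := WithLp.toLp 2 f

def rigidMotionInv {n : ℕ} (R : Matrix (Fin n) (Fin n) ℝ) (T v : EuclideanSpace ℝ (Fin n)) :
    EuclideanSpace ℝ (Fin n) :=
  toEuc (Rᵀ *ᵥ v) - toEuc (Rᵀ *ᵥ T)

noncomputable def sqExpKernel {E : Type*} [NormedAddCommGroup E] (σ ℓ : ℝ) (x y : E) : ℝ :=
  σ ^ 2 * Real.exp (-‖x - y‖ ^ 2 / (2 * ℓ ^ 2))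

lemma norm_toEuc_mulVec {n : ℕ} {M : Matrix (Fin n) (Fin n) ℝ} (hM : Mᵀ * M = 1)
    (v : Fin n → ℝ) : ‖toEuc (M *ᵥ v)‖ = ‖toEuc v‖ := by
  rw [← sq_eq_sq₀ (norm_nonneg _) (norm_nonneg _), ← real_inner_self_eq_norm_sq,
    ← real_inner_self_eq_norm_sq]
  simp only [toEuc, EuclideanSpace.inner_eq_star_dotProduct, star_trivial]
  rw [dotProduct_mulVec, ← vecMul_transpose, vecMul_vecMul, hM, vecMul_one]

lemma norm_rigidMotionInv_sub_rigidMotionInv {n : ℕ} {R : Matrix (Fin n) (Fin n) ℝ}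
    (hR : Rᵀ * R = 1) (T p q : EuclideanSpace ℝ (Fin n)) :
    ‖rigidMotionInv R T p - rigidMotionInv R T q‖ = ‖p - q‖ := by
  have hRt : Rᵀᵀ * Rᵀ = 1 := by rw [transpose_transpose, mul_eq_one_comm, hR]
  rw [rigidMotionInv, rigidMotionInv, sub_sub_sub_cancel_right, toEuc, toEuc, ← WithLp.toLp_sub,
    ← mulVec_sub]
  exact norm_toEuc_mulVec hRt _

lemma Real.exp_neg_norm_sub_sq_div {E : Type*} [NormedAddCommGroup E] [InnerProductSpace ℝ E]
    (x y : E) (c : ℝ) :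
    Real.exp (-‖x - y‖ ^ 2 / c) =
      Real.exp (-‖x‖ ^ 2 / c) * Real.exp (-‖y‖ ^ 2 / c) * Real.exp (2 * inner ℝ x y / c) := by
  rw [← Real.exp_add, ← Real.exp_add, norm_sub_sq_real]
  congr 1
  ring

namespace Matrix

variable {ι : Type*} [Fintype ι]

lemma star_dotProduct_mulVec_self_eq_sum (M : Matrix ι ι ℝ) (c : ι → ℝ) :
    star c ⬝ᵥ M *ᵥ c = ∑ i, ∑ j, c i * c j * M i j := by
  simp [dotProduct, mulVec, Finset.mul_sum, mul_comm, mul_left_comm]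

theorem PosSemidef.map_pow {A : Matrix ι ι ℝ} (hA : A.PosSemidef) (m : ℕ) :
    (A.map (· ^ m)).PosSemidef := by
  induction m with
  | zero =>
    have h : A.map (· ^ 0) = gram ℝ (fun _ : ι => (1 : ℝ)) := by ext; simp
    exact h ▸ posSemidef_gram ℝ _
  | succ m ih =>
    have h : A.map (· ^ (m + 1)) = A.map (· ^ m) ⊙ A := by ext; simp [pow_succ]
    exact h ▸ ih.hadamard hA

theorem PosSemidef.map_exp {A : Matrix ι ι ℝ} (hA : A.PosSemidef) :
    (A.map Real.exp).PosSemidef := by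
  refine .of_dotProduct_mulVec_nonneg (hA.isHermitian.map _ fun _ => by simp) fun c => ?_
  have hsum : HasSum (fun m : ℕ => (star c ⬝ᵥ A.map (· ^ m) *ᵥ c) / m.factorial)
      (star c ⬝ᵥ A.map Real.exp *ᵥ c) := by
    simp only [star_dotProduct_mulVec_self_eq_sum, Finset.sum_div, map_apply]
    refine hasSum_sum fun i _ => hasSum_sum fun j _ => ?_
    have hexp : HasSum (fun m : ℕ => A i j ^ m / m.factorial) (Real.exp (A i j)) :=
      Real.exp_eq_exp_ℝ ▸ NormedSpace.expSeries_div_hasSum_exp (A i j)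
    exact (hexp.mul_left (c i * c j)).congr_fun fun m => by ring
  exact hsum.nonneg fun m => div_nonneg ((hA.map_pow m).dotProduct_mulVec_nonneg c) (by positivity)

theorem PosSemidef.two_mul_abs_dotProduct_toBlocks₁₂_mulVec_le {m n : Type*} [Fintype m]
    [Fintype n] {B : Matrix (m ⊕ n) (m ⊕ n) ℝ} (hB : B.PosSemidef) (u : m → ℝ) (v : n → ℝ) :
    2 * |u ⬝ᵥ B.toBlocks₁₂ *ᵥ v| ≤ u ⬝ᵥ B.toBlocks₁₁ *ᵥ u + v ⬝ᵥ B.toBlocks₂₂ *ᵥ v := by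
  have h₂₁ : B.toBlocks₂₁ = B.toBlocks₁₂ᵀ := by
    ext i j
    simpa [toBlocks₂₁, toBlocks₁₂] using hB.isHermitian.apply (.inl j) (.inr i)
  have hform : ∀ s : ℝ, 0 ≤ u ⬝ᵥ B.toBlocks₁₁ *ᵥ u + 2 * s * (u ⬝ᵥ B.toBlocks₁₂ *ᵥ v) +
      s ^ 2 * (v ⬝ᵥ B.toBlocks₂₂ *ᵥ v) := fun s => by
    have h := hB.dotProduct_mulVec_nonneg (Sum.elim u (s • v))
    rw [← fromBlocks_toBlocks B, fromBlocks_mulVec, dotProduct_block, h₂₁] at h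
    have hcross : v ⬝ᵥ B.toBlocks₁₂ᵀ *ᵥ u = u ⬝ᵥ B.toBlocks₁₂ *ᵥ v := by
      rw [mulVec_transpose, dotProduct_comm, dotProduct_mulVec]
    simp only [Function.comp_def, Sum.elim_inl, Sum.elim_inr, star_trivial, mulVec_smul,
      dotProduct_add, dotProduct_smul, smul_dotProduct, hcross, smul_eq_mul] at h
    linarith
  rcases abs_choice (u ⬝ᵥ B.toBlocks₁₂ *ᵥ v) with h | h <;>
    linarith [hform 1, hform (-1)]

theorem posSemidef_sqExpKernel {E : Type*} [NormedAddCommGroup E] [InnerProductSpace ℝ E]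
    (σ ℓ : ℝ) (x : ι → E) :
    (of fun i j => sqExpKernel σ ℓ (x i) (x j)).PosSemidef := by
  set d : ι → ℝ := fun i => σ * Real.exp (-‖x i‖ ^ 2 / (2 * ℓ ^ 2))
  have h : (of fun i j => sqExpKernel σ ℓ (x i) (x j)) =
      gram ℝ d ⊙ (gram ℝ fun i => ℓ⁻¹ • x i).map Real.exp := by
    ext i j
    simp only [of_apply, hadamard_apply, gram_apply, map_apply, sqExpKernel,
      Real.exp_neg_norm_sub_sq_div, real_inner_smul_left, real_inner_smul_right, d]
    rw [RCLike.inner_apply, conj_trivial, show 2 * inner ℝ (x i) (x j) / (2 * ℓ ^ 2) =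
      ℓ⁻¹ * (ℓ⁻¹ * inner ℝ (x i) (x j)) by ring]
    ring
  exact h ▸ (posSemidef_gram ℝ d).hadamard (posSemidef_gram ℝ _).map_exp

end Matrix

theorem identity_global_maximum_SEn_squared_exponential_general
    (n : ℕ) (σ ℓ : ℝ)
    (I : Type) [NormedAddCommGroup I] [InnerProductSpace ℝ I]
    (ι : Type) [Fintype ι] (x : ι → EuclideanSpace ℝ (Fin n)) (a : ι → I)
    (R : Matrix (Fin n) (Fin n) ℝ) (hR : Rᵀ * R = 1) (T : EuclideanSpace ℝ (Fin n)) :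
    |∑ i : ι, ∑ j : ι, (inner ℝ (a i) (a j) : ℝ) *
        (σ ^ 2 * Real.exp
          (-‖x i - (toEuc (Rᵀ.mulVec (x j)) - toEuc (Rᵀ.mulVec T))‖ ^ 2 / (2 * ℓ ^ 2)))| ≤
        (∑ i : ι, ∑ j : ι, (inner ℝ (a i) (a j) : ℝ) *
          (σ ^ 2 * Real.exp (-‖x i - x j‖ ^ 2 / (2 * ℓ ^ 2)))) ∧
      0 ≤ ∑ i : ι, ∑ j : ι, (inner ℝ (a i) (a j) : ℝ) *
        (σ ^ 2 * Real.exp (-‖x i - x j‖ ^ 2 / (2 * ℓ ^ 2))) := by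
  have hQ := ((posSemidef_gram ℝ a).hadamard
    (posSemidef_sqExpKernel σ ℓ x)).dotProduct_mulVec_nonneg 1
  have hcmp := ((posSemidef_gram ℝ (Sum.elim a a)).hadamard (posSemidef_sqExpKernel σ ℓ
    (Sum.elim x fun j => rigidMotionInv R T (x j)))).two_mul_abs_dotProduct_toBlocks₁₂_mulVec_le 1 1
  simp only [dotProduct, mulVec, toBlocks₁₁, toBlocks₁₂, toBlocks₂₂, of_apply, hadamard_apply,
    gram_apply, Sum.elim_inl, Sum.elim_inr, star_one, Pi.one_apply, one_mul, mul_one, sqExpKernel,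
    norm_rigidMotionInv_sub_rigidMotionInv hR] at hQ hcmp
  simp only [rigidMotionInv] at hcmp
  refine ⟨?_, hQ⟩
  linarith

/-- For the squared exponential kernel `k(x,y) = σ²·exp(−‖x−y‖²/(2ℓ²))` on `ℝⁿ`
and any finite labeled family `(xᵢ, aᵢ)`, for every `R` with `RᵀR = I` and every `T ∈ ℝⁿ`,
`|Σ_{i,j} ⟨aᵢ,aⱼ⟩ k(xᵢ, Rᵀxⱼ − RᵀT)| ≤ Σ_{i,j} ⟨aᵢ,aⱼ⟩ k(xᵢ, xⱼ)`, and the right-hand side is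
nonnegative (the identity is a global maximum of the alignment functional over `SE(n)` when the
two point clouds coincide). -/
theorem identity_global_maximum_SEn_squared_exponential
    (n : ℕ) (σ ℓ : ℝ) (hσ : 0 < σ) (hℓ : 0 < ℓ)
    (I : Type) [NormedAddCommGroup I] [InnerProductSpace ℝ I]
    (ι : Type) [Fintype ι] (x : ι → EuclideanSpace ℝ (Fin n)) (a : ι → I)
    (R : Matrix (Fin n) (Fin n) ℝ) (hR : Rᵀ * R = 1) (T : EuclideanSpace ℝ (Fin n)) :
    |∑ i : ι, ∑ j : ι, (inner ℝ (a i) (a j) : ℝ) *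
        (σ ^ 2 * Real.exp
          (-‖x i - (toEuc (Rᵀ.mulVec (x j)) - toEuc (Rᵀ.mulVec T))‖ ^ 2 / (2 * ℓ ^ 2)))| ≤
        (∑ i : ι, ∑ j : ι, (inner ℝ (a i) (a j) : ℝ) *
          (σ ^ 2 * Real.exp (-‖x i - x j‖ ^ 2 / (2 * ℓ ^ 2)))) ∧
      0 ≤ ∑ i : ι, ∑ j : ι, (inner ℝ (a i) (a j) : ℝ) *
        (σ ^ 2 * Real.exp (-‖x i - x j‖ ^ 2 / (2 * ℓ ^ 2))) :=
  identity_global_maximum_SEn_squared_exponential_general n σ ℓ I ι x a R hR T
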